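/- Let x ∈ ℝⁿ satisfy x₁↓ = ⋯ = x_k↓ ≥ x_{k+1}↓ = ⋯ = x_n↓ for some 1 ≤ k ≤ n (i.e., x takes at most two distinct values, the larger with multiplicity k). If y ∈ ℝⁿ satisfies Σ_{i=1}^k y_i↓ ≥ Σ_{i=1}^k x_i↓ and Σ_{i=1}^n y_i↓ = Σ_{i=1}^n x_i↓, then y majorizes x. -/
import Mathlib


/-- The sum of the `k` largest entries of `u`. -/
noncomputable def maxSum {n : ℕ} (u : Fin n → ℝ) (k : ℕ) : ℝ :=
  sSup {s : ℝ | ∃ A : Finset (Fin n), A.card = k ∧ ∑ i ∈ A, u i = s}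

/-- `Majorizes v u` means `u ≺ v`. -/
def Majorizes {n : ℕ} (v u : Fin n → ℝ) : Prop :=
  (∀ k : ℕ, maxSum u k ≤ maxSum v k) ∧ ∑ i, u i = ∑ i, v i

open Finset in
def seg (n a b : ℕ) : Finset (Fin n) :=
  Finset.univ.filter (fun i => a ≤ i.val ∧ i.val < b)

lemma seg_card {n a b : ℕ} (hb : b ≤ n) : (seg n a b).card = b - a := by
  classical
  have h : seg n a b = (Finset.Ico a b).attachFin
      (fun x hx => lt_of_lt_of_le (Finset.mem_Ico.mp hx).2 hb) := by
    ext i; simp [seg, Finset.mem_attachFin, Finset.mem_Ico]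
  rw [h, Finset.card_attachFin, Nat.card_Ico]

lemma seg_split {n a b c : ℕ} (w : Fin n → ℝ) (hab : a ≤ b) (hbc : b ≤ c) :
    ∑ i ∈ seg n a c, w i = ∑ i ∈ seg n a b, w i + ∑ i ∈ seg n b c, w i := by
  rw [← Finset.sum_union (by simp [Finset.disjoint_left, seg]; omega)]
  congr 1
  ext i; simp [seg]; omega

lemma strictMono_fin_le {m : ℕ} (f : Fin m → ℕ) (hf : StrictMono f) (j : Fin m) :
    (j : ℕ) ≤ f j := by
  obtain ⟨i, hi⟩ := j
  induction i with
  | zero => exact Nat.zero_le _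
  | succ i ih =>
    have hi' : i < m := by omega
    have h1 : f ⟨i, hi'⟩ < f ⟨i + 1, hi⟩ := hf (by simp [Fin.lt_def])
    have h2 := ih hi'
    simp only [] at h2 ⊢
    omega

lemma sum_le_seg {n : ℕ} (w : Fin n → ℝ) (hw : Antitone w) (A : Finset (Fin n)) :
    ∑ i ∈ A, w i ≤ ∑ i ∈ seg n 0 A.card, w i := by
  classical
  set m := A.card with hm
  have hmn : m ≤ n := by
    simpa using Finset.card_le_univ A
  have e := A.orderIsoOfFin hm.symm
  have hstrict : StrictMono (fun j : Fin m => (((e j : A) : Fin n) : ℕ)) := by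
    intro i j hij
    exact_mod_cast (e.strictMono hij)
  have hle : ∀ j : Fin m, (j : ℕ) ≤ (((e j : A) : Fin n) : ℕ) :=
    strictMono_fin_le _ hstrict
  have h1 : ∑ i ∈ A, w i = ∑ j : Fin m, w ((e j : A) : Fin n) := by
    rw [← Finset.sum_coe_sort A w]
    exact (Equiv.sum_comp e.toEquiv (fun x : A => w (x : Fin n))).symm
  have hseg : seg n 0 m = Finset.univ.map (Fin.castLEEmb hmn) := by
    ext i
    simp only [seg, Finset.mem_filter, Finset.mem_univ, true_and, Finset.mem_map,
      Fin.castLEEmb_apply]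
    constructor
    · rintro ⟨-, hi⟩
      exact ⟨⟨i.val, hi⟩, by ext; simp⟩
    · rintro ⟨j, rfl⟩
      exact ⟨Nat.zero_le _, j.2⟩
  have h2 : ∑ i ∈ seg n 0 m, w i = ∑ j : Fin m, w (Fin.castLE hmn j) := by
    rw [hseg, Finset.sum_map]
    rfl
  rw [h1, h2]
  apply Finset.sum_le_sum
  intro j _
  apply hw
  exact_mod_cast hle j

lemma maxSum_antitone_eq {n : ℕ} (w : Fin n → ℝ) (hw : Antitone w) {m : ℕ} (hm : m ≤ n) :
    maxSum w m = ∑ i ∈ seg n 0 m, w i := by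
  have hcard : (seg n 0 m).card = m := by rw [seg_card hm]; omega
  have hmem : (∑ i ∈ seg n 0 m, w i) ∈
      {s : ℝ | ∃ A : Finset (Fin n), A.card = m ∧ ∑ i ∈ A, w i = s} :=
    ⟨seg n 0 m, hcard, rfl⟩
  have hub : ∀ s ∈ {s : ℝ | ∃ A : Finset (Fin n), A.card = m ∧ ∑ i ∈ A, w i = s},
      s ≤ ∑ i ∈ seg n 0 m, w i := by
    rintro s ⟨A, hA, rfl⟩
    have := sum_le_seg w hw A
    rwa [hA] at this
  exact le_antisymm (csSup_le ⟨_, hmem⟩ hub) (le_csSup ⟨_, hub⟩ hmem)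

lemma maxSum_comp_equiv {n : ℕ} (w : Fin n → ℝ) (e : Equiv.Perm (Fin n)) (m : ℕ) :
    maxSum (w ∘ e) m = maxSum w m := by
  unfold maxSum
  congr 1
  ext s
  constructor
  · rintro ⟨A, hA, rfl⟩
    refine ⟨A.image e, by rw [Finset.card_image_of_injective _ e.injective, hA], ?_⟩
    rw [Finset.sum_image (fun a _ b _ h => e.injective h)]
    rfl
  · rintro ⟨B, hB, rfl⟩
    refine ⟨B.image e.symm, by rw [Finset.card_image_of_injective _ e.symm.injective, hB], ?_⟩
    rw [Finset.sum_image (fun a _ b _ h => e.symm.injective h)]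
    simp

lemma exists_antitone_maxSum {n : ℕ} (y : Fin n → ℝ) :
    ∃ w : Fin n → ℝ, Antitone w ∧ (∀ m, maxSum y m = maxSum w m) ∧ ∑ i, w i = ∑ i, y i := by
  classical
  set σ := Tuple.sort y with hσ
  set e : Equiv.Perm (Fin n) := (Fin.revPerm : Equiv.Perm (Fin n)).trans σ with he
  refine ⟨y ∘ e, ?_, fun m => (maxSum_comp_equiv y e m).symm, Equiv.sum_comp e y⟩
  intro i j hij
  have hmono := Tuple.monotone_sort y
  have : Fin.rev j ≤ Fin.rev i := Fin.rev_le_rev.mpr hij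
  simpa [he, Equiv.trans_apply] using hmono this

lemma maxSum_of_card_lt {n m : ℕ} (u : Fin n → ℝ) (h : n < m) : maxSum u m = 0 := by
  unfold maxSum
  convert Real.sSup_empty
  rw [Set.eq_empty_iff_forall_notMem]
  rintro s ⟨A, hA, -⟩
  have := Finset.card_le_univ A
  simp only [Finset.card_univ, Fintype.card_fin] at this
  omega

lemma seg_key {n : ℕ} (w : Fin n → ℝ) (hw : Antitone w) {p m q : ℕ}
    (hpm : p ≤ m) (hmq : m ≤ q) (hq : q ≤ n) :
    ((m : ℝ) - p) * ∑ i ∈ seg n m q, w i ≤ ((q : ℝ) - m) * ∑ i ∈ seg n p m, w i := by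
  rcases eq_or_lt_of_le hmq with rfl | h
  · have hempty : seg n m m = ∅ := by
      refine Finset.filter_eq_empty_iff.mpr (fun hi => by omega)
    simp [hempty]
  · have hmn : m < n := lt_of_lt_of_le h hq
    set c := w ⟨m, hmn⟩ with hc
    have h1 : ∑ i ∈ seg n m q, w i ≤ ((q : ℝ) - m) * c := by
      calc ∑ i ∈ seg n m q, w i ≤ ∑ _i ∈ seg n m q, c := by
            apply Finset.sum_le_sum
            intro i hi
            apply hw
            simp only [seg, Finset.mem_filter] at hi
            simp only [Fin.le_def]
            exact hi.2.1
        _ = ((q : ℝ) - m) * c := by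
            rw [Finset.sum_const, seg_card hq, nsmul_eq_mul, Nat.cast_sub hmq]
    have h2 : ((m : ℝ) - p) * c ≤ ∑ i ∈ seg n p m, w i := by
      calc ((m : ℝ) - p) * c = ∑ _i ∈ seg n p m, c := by
            rw [Finset.sum_const, seg_card (le_of_lt hmn), nsmul_eq_mul, Nat.cast_sub hpm]
        _ ≤ ∑ i ∈ seg n p m, w i := by
            apply Finset.sum_le_sum
            intro i hi
            apply hw
            simp only [seg, Finset.mem_filter] at hi
            simp only [Fin.le_def]
            exact le_of_lt hi.2.2
    have hmp : (0 : ℝ) ≤ (m : ℝ) - p := by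
      have : (p : ℝ) ≤ m := by exact_mod_cast hpm
      linarith
    have hqm : (0 : ℝ) ≤ (q : ℝ) - m := by
      have : (m : ℝ) ≤ q := by exact_mod_cast hmq
      linarith
    calc ((m : ℝ) - p) * ∑ i ∈ seg n m q, w i ≤ ((m : ℝ) - p) * (((q : ℝ) - m) * c) :=
          mul_le_mul_of_nonneg_left h1 hmp
      _ = ((q : ℝ) - m) * (((m : ℝ) - p) * c) := by ring
      _ ≤ ((q : ℝ) - m) * ∑ i ∈ seg n p m, w i := mul_le_mul_of_nonneg_left h2 hqm

theorem majorizes_of_two_valued' {n k : ℕ} (hn : 0 < n) (hk1 : 1 ≤ k) (hkn : k ≤ n)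
    (x y : Fin n → ℝ)
    (hsort : Antitone x)
    (htwo : ∀ i : Fin n,
      (i.val < k → x i = x ⟨0, hn⟩) ∧ (k ≤ i.val → x i = x ⟨n - 1, Nat.sub_lt hn one_pos⟩))
    (hk : maxSum x k ≤ maxSum y k)
    (hsum : ∑ i, y i = ∑ i, x i) :
    (∀ m : ℕ, maxSum x m ≤ maxSum y m) ∧ ∑ i, x i = ∑ i, y i := by
  classical
  set a := x ⟨0, hn⟩ with ha
  set b := x ⟨n - 1, Nat.sub_lt hn one_pos⟩ with hb
  -- sums of x over segments
  have hSxa : ∀ {m : ℕ}, m ≤ k → ∑ i ∈ seg n 0 m, x i = (m : ℝ) * a := by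
    intro m hm
    have : ∑ i ∈ seg n 0 m, x i = ∑ _i ∈ seg n 0 m, a := by
      apply Finset.sum_congr rfl
      intro i hi
      simp only [seg, Finset.mem_filter] at hi
      exact (htwo i).1 (lt_of_lt_of_le hi.2.2 hm)
    rw [this, Finset.sum_const, seg_card (le_trans hm hkn), nsmul_eq_mul, Nat.sub_zero]
  have hSxb : ∀ {p m : ℕ}, k ≤ p → p ≤ m → m ≤ n →
      ∑ i ∈ seg n p m, x i = ((m : ℝ) - p) * b := by
    intro p m hp hpm hm
    have : ∑ i ∈ seg n p m, x i = ∑ _i ∈ seg n p m, b := by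
      apply Finset.sum_congr rfl
      intro i hi
      simp only [seg, Finset.mem_filter] at hi
      exact (htwo i).2 (le_trans hp hi.2.1)
    rw [this, Finset.sum_const, seg_card hm, nsmul_eq_mul, Nat.cast_sub hpm]
  have hsegn : ∀ (u : Fin n → ℝ), ∑ i ∈ seg n 0 n, u i = ∑ i, u i := by
    intro u
    apply Finset.sum_congr _ (fun _ _ => rfl)
    refine Finset.filter_true_of_mem (fun i _ => ⟨Nat.zero_le _, i.2⟩)
  -- maxSum of x
  have hmx : ∀ {m : ℕ}, m ≤ n → maxSum x m = ∑ i ∈ seg n 0 m, x i :=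
    fun {m} hm => maxSum_antitone_eq x hsort hm
  have hmxk : maxSum x k = (k : ℝ) * a := by rw [hmx hkn, hSxa le_rfl]
  -- sorted version of y
  obtain ⟨w, hw, hmy, hwsum⟩ := exists_antitone_maxSum y
  have hmyw : ∀ {m : ℕ}, m ≤ n → maxSum y m = ∑ i ∈ seg n 0 m, w i :=
    fun {m} hm => (hmy m).trans (maxSum_antitone_eq w hw hm)
  -- total sum
  have hT : ∑ i ∈ seg n 0 n, w i = (k : ℝ) * a + ((n : ℝ) - k) * b := by
    rw [hsegn w, hwsum, hsum, ← hsegn x, seg_split x (Nat.zero_le k) hkn,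
      hSxa le_rfl, hSxb le_rfl hkn le_rfl]
  have hka : (k : ℝ) * a ≤ ∑ i ∈ seg n 0 k, w i := by
    rw [← hmxk, ← hmyw hkn]; exact hk
  constructor
  · intro m
    rcases le_or_gt m n with hm | hm
    · rcases le_or_gt m k with hmk | hmk
      · -- m ≤ k
        rw [hmx hm, hmyw hm, hSxa hmk]
        have hkey := seg_key w hw (Nat.zero_le m) hmk hkn
        have hsplit := seg_split w (Nat.zero_le m) hmk
        have h1 : (m : ℝ) * ∑ i ∈ seg n 0 k, w i ≤ (k : ℝ) * ∑ i ∈ seg n 0 m, w i := by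
          rw [hsplit]
          push_cast at hkey
          nlinarith [hkey]
        have h2 := mul_le_mul_of_nonneg_left hka (Nat.cast_nonneg m : (0:ℝ) ≤ m)
        have hkpos : (0 : ℝ) < (k : ℝ) := by exact_mod_cast hk1
        have h3 : (k : ℝ) * ((m : ℝ) * a) ≤ (k : ℝ) * ∑ i ∈ seg n 0 m, w i := by
          nlinarith [h1, h2]
        exact le_of_mul_le_mul_left h3 hkpos
      · -- k < m ≤ n
        have hkm : k ≤ m := le_of_lt hmk
        have hknlt : k < n := lt_of_lt_of_le hmk hm
        rw [hmx hm, hmyw hm, seg_split x (Nat.zero_le k) hkm, hSxa le_rfl, hSxb le_rfl hkm hm]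
        have hkey := seg_key w hw hkm hm (le_refl n)
        have e1 := seg_split w (Nat.zero_le k) hkm   -- S m = S k + E(k,m)
        have e2 := seg_split w (Nat.zero_le m) hm    -- S n = S m + E(m,n)
        have h3 := mul_le_mul_of_nonneg_left hka
          (show (0:ℝ) ≤ (n : ℝ) - m by
            have : (m : ℝ) ≤ n := by exact_mod_cast hm
            linarith)
        have hnk : (0 : ℝ) < (n : ℝ) - k := by
          have : (k : ℝ) < n := by exact_mod_cast hknlt
          linarith
        have hgoal : ((n : ℝ) - k) * ((k : ℝ) * a + ((m : ℝ) - k) * b) ≤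
            ((n : ℝ) - k) * ∑ i ∈ seg n 0 m, w i := by
          push_cast at hkey e1 e2 h3 hT ⊢
          nlinarith [hkey, e1, e2, h3, hT]
        exact le_of_mul_le_mul_left hgoal hnk
    · rw [maxSum_of_card_lt x hm, maxSum_of_card_lt y hm]
  · exact hsum.symm

/-- Let `x` be sorted non-increasingly taking at most two values: the larger on the first
`k` coordinates and the smaller on the rest. If the sum of the `k` largest entries of `y`
is at least that of `x`, with equal total sums, then `y` majorizes `x`. -/
theorem majorizes_of_two_valued {n k : ℕ} (hn : 0 < n) (hk1 : 1 ≤ k) (hkn : k ≤ n)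
    (x y : Fin n → ℝ)
    (hsort : Antitone x)
    (htwo : ∀ i : Fin n,
      (i.val < k → x i = x ⟨0, hn⟩) ∧ (k ≤ i.val → x i = x ⟨n - 1, Nat.sub_lt hn one_pos⟩))
    (hk : maxSum x k ≤ maxSum y k)
    (hsum : ∑ i, y i = ∑ i, x i) :
    Majorizes y x := by
  obtain ⟨h1, h2⟩ := majorizes_of_two_valued' hn hk1 hkn x y hsort htwo hk hsum
  exact ⟨h1, h2⟩
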